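/- Let a ≠ 0 and c ≠ 0, and define the translation distance d(P,Q) = N(P⁻¹·Q) with N(x,y,z) = √(x² + y² + (z − xy/2)²) on the Heisenberg group (ℝ³,·). For any point (x,y,z) with 4ay + 8c ≠ 0, d((0,0,0),(x,y,z)) = d((x,y,z),(a,0,c)) holds if and only if z = (a²(y² + 4) + 2a(2cy + x(y² − 4)) + 4c(c + xy))/(4ay + 8c). -/

import Mathlib

def hmul (p q : ℝ × ℝ × ℝ) : ℝ × ℝ × ℝ :=
  (p.1 + q.1, p.2.1 + q.2.1, p.2.2 + q.2.2 + p.1 * q.2.1)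

def hinv (p : ℝ × ℝ × ℝ) : ℝ × ℝ × ℝ :=
  (-p.1, -p.2.1, p.1 * p.2.1 - p.2.2)

noncomputable def N (p : ℝ × ℝ × ℝ) : ℝ :=
  Real.sqrt (p.1 ^ 2 + p.2.1 ^ 2 + (p.2.2 - p.1 * p.2.1 / 2) ^ 2)

noncomputable def d (p q : ℝ × ℝ × ℝ) : ℝ := N (hmul (hinv p) q)

/-! Both distances are square roots, so the bisector condition is the equality of their radicands.
The quadratic terms in `z` cancel there, leaving an equation that is linear in `z` with
coefficient `4ay + 8c`. -/

noncomputable def Nsq (p : ℝ × ℝ × ℝ) : ℝ :=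
  p.1 ^ 2 + p.2.1 ^ 2 + (p.2.2 - p.1 * p.2.1 / 2) ^ 2

lemma Nsq_nonneg (p : ℝ × ℝ × ℝ) : 0 ≤ Nsq p := by
  unfold Nsq
  positivity

lemma N_eq_N_iff (p q : ℝ × ℝ × ℝ) : N p = N q ↔ Nsq p = Nsq q :=
  Real.sqrt_inj (Nsq_nonneg p) (Nsq_nonneg q)

lemma d_origin_eq_d_iff (a c x y z : ℝ) :
    d (0, 0, 0) (x, y, z) = d (x, y, z) (a, 0, c) ↔
      (4 * a * y + 8 * c) * z =
        a ^ 2 * (y ^ 2 + 4) + 2 * a * (2 * c * y + x * (y ^ 2 - 4)) + 4 * c * (c + x * y) := by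
  rw [d, d, N_eq_N_iff]
  simp only [Nsq, hmul, hinv]
  constructor
  · intro h
    linear_combination 4 * h
  · intro h
    linear_combination h / 4

theorem nil_bisector_xz_general (a c x y z : ℝ)
    (hden : 4 * a * y + 8 * c ≠ 0) :
    d ((0 : ℝ), (0 : ℝ), (0 : ℝ)) (x, y, z) = d (x, y, z) (a, (0 : ℝ), c) ↔
      z = (a ^ 2 * (y ^ 2 + 4) + 2 * a * (2 * c * y + x * (y ^ 2 - 4)) + 4 * c * (c + x * y)) /
        (4 * a * y + 8 * c) := by
  rw [d_origin_eq_d_iff, eq_div_iff hden, mul_comm]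

theorem nil_bisector_xz (a c x y z : ℝ) (ha : a ≠ 0) (hc : c ≠ 0)
    (hden : 4 * a * y + 8 * c ≠ 0) :
    d ((0 : ℝ), (0 : ℝ), (0 : ℝ)) (x, y, z) = d (x, y, z) (a, (0 : ℝ), c) ↔
      z = (a ^ 2 * (y ^ 2 + 4) + 2 * a * (2 * c * y + x * (y ^ 2 - 4)) + 4 * c * (c + x * y)) /
        (4 * a * y + 8 * c) :=
  nil_bisector_xz_general a c x y z hden
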